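/- arXiv:1708.05648 — 2 statements merged into one kernel-verified Lean document; each statement's English description precedes it below -/
import Mathlib

section
/- Let $g:[0,\infty)\to[0,\infty)$ be differentiable with $g'(x)\ge 0$ for all $x\ge 0$, and suppose $\int_x^\infty g'(t)/t\,dt < \infty$ for all $x>0$. Then for any nonnegative integrable function $f$ on a ball $B_r(x_0)\subset\mathbb{R}^n$, the average of $g\circ f$ satisfies $\fint_{B_r(x_0)} g(f(y))\,dy \le J_g\big(\fint_{B_r(x_0)} f(y)\,dy\big)$, where $J_g(x) = g(x) + x\int_x^\infty \frac{g'(t)}{t}\,dt$. -/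
/-!
For `0 < a` and `0 ≤ s` one has the affine bound `g s ≤ g a + s * ∫_a^∞ g'(t)/t dt`: below `a`
this is monotonicity of `g`, and above `a` it is the fundamental theorem of calculus together
with `g'(t) ≤ s * g'(t)/t` for `t ≤ s`. Averaging this bound at `s = f y` with `a` the average of
`f` gives `J_g(a)`. When the average of `f` vanishes, `f = 0` almost everywhere and both sides
equal `g 0`.
-/

open MeasureTheory Metric Set

/-- The majorant `J_g` of the paper. -/
noncomputable def jensenBound (g : ℝ → ℝ) (x : ℝ) : ℝ :=
  g x + x * ∫ t in Ioi x, deriv g t / t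

section Pointwise

variable {g : ℝ → ℝ} {a s : ℝ}

theorem sub_le_mul_intervalIntegral_deriv_div (hg : Differentiable ℝ g)
    (hg' : ∀ x > 0, 0 ≤ deriv g x) (ha : 0 < a) (has : a ≤ s)
    (hint : IntegrableOn (fun t => deriv g t / t) (Ioc a s)) :
    g s - g a ≤ s * ∫ t in a..s, deriv g t / t := by
  rw [← intervalIntegral.integral_const_mul]
  refine intervalIntegral.sub_le_integral_of_hasDeriv_right_of_le has
    hg.continuous.continuousOn (fun t _ => (hg t).hasDerivAt.hasDerivWithinAt)
    ((integrableOn_Icc_iff_integrableOn_Ioc (f := fun t => s * (deriv g t / t))).2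
      (hint.const_mul s)) fun t ht => ?_
  have ht0 : 0 < t := ha.trans ht.1
  calc deriv g t = t * (deriv g t / t) := by field_simp
    _ ≤ s * (deriv g t / t) := by gcongr; exacts [div_nonneg (hg' t ht0) ht0.le, ht.2.le]

theorem le_add_mul_integral_deriv_div (hg : Differentiable ℝ g)
    (hg' : ∀ x > 0, 0 ≤ deriv g x) (ha : 0 < a) (hs : 0 ≤ s)
    (hint : IntegrableOn (fun t => deriv g t / t) (Ioi a)) :
    g s ≤ g a + s * ∫ t in Ioi a, deriv g t / t := by
  have hC_nonneg : ∀ t ∈ Ioi a, 0 ≤ deriv g t / t := fun t ht =>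
    div_nonneg (hg' t (ha.trans ht)) (ha.trans ht).le
  rcases le_or_gt s a with hsa | has
  · have hmono : MonotoneOn g (Ici 0) :=
      monotoneOn_of_deriv_nonneg (convex_Ici 0) hg.continuous.continuousOn
        (fun x _ => (hg x).differentiableWithinAt) fun x hx => hg' x (interior_Ici.subset hx)
    exact (hmono hs ha.le hsa).trans <| le_add_of_nonneg_right <|
      mul_nonneg hs (setIntegral_nonneg measurableSet_Ioi hC_nonneg)
  · have hIoc : ∫ t in a..s, deriv g t / t ≤ ∫ t in Ioi a, deriv g t / t := by
      rw [intervalIntegral.integral_of_le has.le]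
      exact setIntegral_mono_set hint ((ae_restrict_mem measurableSet_Ioi).mono hC_nonneg)
        (.of_forall Ioc_subset_Ioi_self)
    have := sub_le_mul_intervalIntegral_deriv_div hg hg' ha has.le
      (hint.mono_set Ioc_subset_Ioi_self)
    linarith [mul_le_mul_of_nonneg_left hIoc hs]

end Pointwise

section Averages

variable {α : Type*} [MeasurableSpace α] {μ : Measure α} {g : ℝ → ℝ} {f : α → ℝ}

theorem integral_comp_le_jensenBound [IsProbabilityMeasure μ] (hg : Differentiable ℝ g)
    (hg' : ∀ x > 0, 0 ≤ deriv g x)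
    (hg_int : ∀ x > 0, IntegrableOn (fun t => deriv g t / t) (Ioi x))
    (hf_nonneg : 0 ≤ᵐ[μ] f) (hf : Integrable f μ) (hgf : Integrable (fun y => g (f y)) μ) :
    ∫ y, g (f y) ∂μ ≤ jensenBound g (∫ y, f y ∂μ) := by
  set a := ∫ y, f y ∂μ
  have ha_nonneg : 0 ≤ a := integral_nonneg_of_ae hf_nonneg
  rcases ha_nonneg.eq_or_lt with ha | ha
  · have hf0 : f =ᵐ[μ] 0 := (integral_eq_zero_iff_of_nonneg_ae hf_nonneg hf).1 ha.symm
    have hgf0 : (fun y => g (f y)) =ᵐ[μ] fun _ => g 0 := hf0.mono fun y hy => by simp [hy]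
    rw [integral_congr_ae hgf0, jensenBound, ← ha]
    simp
  · set C := ∫ t in Ioi a, deriv g t / t
    calc ∫ y, g (f y) ∂μ ≤ ∫ y, (g a + f y * C) ∂μ :=
          integral_mono_ae hgf ((integrable_const _).add (hf.mul_const C)) <|
            hf_nonneg.mono fun y hy => le_add_mul_integral_deriv_div hg hg' ha hy (hg_int a ha)
      _ = jensenBound g a := by
          rw [integral_add (integrable_const _) (hf.mul_const C), integral_const,
            integral_mul_const, jensenBound, probReal_univ, one_smul]

theorem average_comp_le_jensenBound [IsFiniteMeasure μ] [NeZero μ] (hg : Differentiable ℝ g)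
    (hg' : ∀ x > 0, 0 ≤ deriv g x)
    (hg_int : ∀ x > 0, IntegrableOn (fun t => deriv g t / t) (Ioi x))
    (hf_nonneg : 0 ≤ᵐ[μ] f) (hf : Integrable f μ) (hgf : Integrable (fun y => g (f y)) μ) :
    ⨍ y, g (f y) ∂μ ≤ jensenBound g (⨍ y, f y ∂μ) := by
  have hc : (μ univ)⁻¹ ≠ ⊤ := ENNReal.inv_ne_top.2 (NeZero.ne _)
  rw [average_eq', average_eq']
  exact integral_comp_le_jensenBound hg hg' hg_int (Measure.ae_smul_measure hf_nonneg _)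
    (hf.smul_measure hc) (hgf.smul_measure hc)

end Averages

theorem stmt_0_general (n : ℕ) (g : ℝ → ℝ)
    (hg_diff : Differentiable ℝ g)
    (hg'_nonneg : ∀ x ≥ (0:ℝ), 0 ≤ deriv g x)
    (hg_int : ∀ x > (0:ℝ), IntegrableOn (fun t => deriv g t / t) (Set.Ioi x))
    (x₀ : EuclideanSpace ℝ (Fin n)) (r : ℝ) (hr : 0 < r)
    (f : EuclideanSpace ℝ (Fin n) → ℝ)
    (hf_nonneg : ∀ y, 0 ≤ f y)
    (hf_int : IntegrableOn f (ball x₀ r))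
    (hgf_int : IntegrableOn (fun y => g (f y)) (ball x₀ r)) :
    ⨍ y in ball x₀ r, g (f y) ≤
      g (⨍ y in ball x₀ r, f y) +
        (⨍ y in ball x₀ r, f y) * ∫ t in Set.Ioi (⨍ y in ball x₀ r, f y), deriv g t / t := by
  have : NeZero (volume (ball x₀ r)) := ⟨(measure_ball_pos volume x₀ hr).ne'⟩
  have : IsFiniteMeasure (volume.restrict (ball x₀ r)) :=
    isFiniteMeasure_restrict.2 measure_ball_lt_top.ne
  exact average_comp_le_jensenBound hg_diff (fun x hx => hg'_nonneg x hx.le) hg_int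
    (.of_forall hf_nonneg) hf_int hgf_int

/-- Jensen-type inequality for functions with nonnegative derivative:
the average of `g ∘ f` over a ball is bounded by `J_g` of the average of `f`,
where `J_g x = g x + x * ∫_x^∞ g'(t)/t dt`. -/
theorem stmt_0 (n : ℕ) (g : ℝ → ℝ)
    (hg_nonneg : ∀ x ≥ (0:ℝ), 0 ≤ g x)
    (hg_diff : Differentiable ℝ g)
    (hg'_nonneg : ∀ x ≥ (0:ℝ), 0 ≤ deriv g x)
    (hg_int : ∀ x > (0:ℝ), IntegrableOn (fun t => deriv g t / t) (Set.Ioi x))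
    (x₀ : EuclideanSpace ℝ (Fin n)) (r : ℝ) (hr : 0 < r)
    (f : EuclideanSpace ℝ (Fin n) → ℝ)
    (hf_nonneg : ∀ y, 0 ≤ f y)
    (hf_int : IntegrableOn f (ball x₀ r))
    (hgf_int : IntegrableOn (fun y => g (f y)) (ball x₀ r)) :
    ⨍ y in ball x₀ r, g (f y) ≤
      g (⨍ y in ball x₀ r, f y) +
        (⨍ y in ball x₀ r, f y) * ∫ t in Set.Ioi (⨍ y in ball x₀ r, f y), deriv g t / t :=
  stmt_0_general n g hg_diff hg'_nonneg hg_int x₀ r hr f hf_nonneg hf_int hgf_int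
end

section
/- Let $F:[0,\infty)\to\mathbb{R}$ be $C^2$ with $F''\ge 0$ on $[0,\infty)$ (i.e. $F$ convex), and let $e(x)=F'(x)x-F(x)$. Then $e$ is monotone nondecreasing on $[0,\infty)$, and for any nonnegative integrable $f$ on a ball $B\subset\mathbb{R}^n$, by convexity duality one has $\fint_B e(f(y))\,dy \le e\big(\fint_B f\big) + \big(\fint_B f\big)\int_{\fint_B f}^{\infty} \frac{e'(t)}{t}\,dt$, provided the last integral is finite. -/
/-!
Since `e'(t) = F''(t) t ≥ 0` for `t ≥ 0`, `e` is nondecreasing on `[0, ∞)`. With `m = ⨍_B f` and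
`C = ∫_m^∞ e'(t)/t dt ≥ 0`, every `x ≥ 0` satisfies the affine bound `e x ≤ e m + x C`: for `x ≤ m`
by monotonicity, and for `x > m` because `e x - e m = ∫_m^x e'(t) dt ≤ x ∫_m^x e'(t)/t dt`.
Averaging the affine bound over the ball gives the inequality.
-/

open MeasureTheory Metric Set

theorem hasDerivAt_deriv_mul_sub {F : ℝ → ℝ} {t : ℝ} (hF : DifferentiableAt ℝ F t)
    (hF' : DifferentiableAt ℝ (deriv F) t) :
    HasDerivAt (fun s => deriv F s * s - F s) (deriv (deriv F) t * t) t := by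
  have h := (hF'.hasDerivAt.mul (hasDerivAt_id' t)).sub hF.hasDerivAt
  rwa [mul_one, add_sub_cancel_right] at h

theorem monotoneOn_Ici_of_deriv_nonneg {e : ℝ → ℝ} {a : ℝ}
    (hd : ∀ t ≥ a, DifferentiableAt ℝ e t) (hd0 : ∀ t ≥ a, 0 ≤ deriv e t) :
    MonotoneOn e (Ici a) := by
  refine monotoneOn_of_deriv_nonneg (convex_Ici a)
    (fun t ht => (hd t ht).continuousAt.continuousWithinAt) (fun t ht => ?_) (fun t ht => ?_)
  · exact (hd t (interior_subset ht)).differentiableWithinAt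
  · exact hd0 t (interior_subset ht)

theorem le_add_mul_integral_deriv_div_s6 {e : ℝ → ℝ} (hd : ∀ t ≥ 0, DifferentiableAt ℝ e t)
    (hd0 : ∀ t ≥ 0, 0 ≤ deriv e t) {m x : ℝ} (hm : 0 ≤ m) (hx : 0 ≤ x)
    (hint : IntegrableOn (fun t => deriv e t / t) (Ioi m)) :
    e x ≤ e m + x * ∫ t in Ioi m, deriv e t / t := by
  have hquot : ∀ t ∈ Ioi m, 0 ≤ deriv e t / t := fun t ht =>
    div_nonneg (hd0 t (hm.trans ht.le)) (hm.trans ht.le)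
  rcases le_or_gt x m with hxm | hmx
  · have hC : 0 ≤ ∫ t in Ioi m, deriv e t / t := setIntegral_nonneg measurableSet_Ioi hquot
    have := monotoneOn_Ici_of_deriv_nonneg hd hd0 hx hm hxm
    nlinarith [mul_nonneg hx hC]
  have hdint : IntegrableOn (deriv e) (Ioc m x) :=
    intervalIntegral.integrableOn_deriv_of_nonneg
      (fun t ht => (hd t (hm.trans ht.1)).continuousAt.continuousWithinAt)
      (fun t ht => (hd t (hm.trans ht.1.le)).hasDerivAt)
      (fun t ht => hd0 t (hm.trans ht.1.le))
  calc e x = e m + ∫ t in Ioc m x, deriv e t := by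
        rw [← intervalIntegral.integral_of_le hmx.le, intervalIntegral.integral_deriv_eq_sub
          (fun t ht => hd t (hm.trans (uIcc_of_le hmx.le ▸ ht).1))
          ((intervalIntegrable_iff_integrableOn_Ioc_of_le hmx.le).2 hdint)]
        ring
    -- on `Ioc m x` we have `t > 0`, so `deriv e t / t` is never the junk value at `t = 0`
    _ ≤ e m + ∫ t in Ioc m x, x * (deriv e t / t) := by
        gcongr e m + ?_
        refine setIntegral_mono_on hdint ((hint.mono_set Ioc_subset_Ioi_self).const_mul x)
          measurableSet_Ioc fun t ht => ?_
        have ht0 : 0 < t := hm.trans_lt ht.1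
        calc deriv e t = t * (deriv e t / t) := (mul_div_cancel₀ _ ht0.ne').symm
          _ ≤ x * (deriv e t / t) := mul_le_mul_of_nonneg_right ht.2 (hquot t ht.1)
    _ = e m + x * ∫ t in Ioc m x, deriv e t / t := by rw [integral_const_mul]
    _ ≤ e m + x * ∫ t in Ioi m, deriv e t / t := by
        gcongr e m + x * ?_
        exact setIntegral_mono_set hint ((ae_restrict_iff' measurableSet_Ioi).2
          (Filter.Eventually.of_forall hquot)) Ioc_subset_Ioi_self.eventuallyLE

theorem average_le_add_average_mul {α : Type*} [MeasurableSpace α] {μ : Measure α}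
    [IsFiniteMeasure μ] [NeZero μ] {g f : α → ℝ} {a C : ℝ} (hg : Integrable g μ)
    (hf : Integrable f μ) (hle : ∀ᵐ y ∂μ, g y ≤ a + f y * C) :
    ⨍ y, g y ∂μ ≤ a + (⨍ y, f y ∂μ) * C := by
  have hμ : 0 < μ.real univ := by
    simp [measureReal_def, ENNReal.toReal_pos_iff, measure_lt_top, NeZero.ne μ]
  simp only [average_eq, smul_eq_mul]
  calc (μ.real univ)⁻¹ * ∫ y, g y ∂μ ≤ (μ.real univ)⁻¹ * ∫ y, (a + f y * C) ∂μ := by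
        gcongr (μ.real univ)⁻¹ * ?_
        exact integral_mono_ae hg ((integrable_const a).add (hf.mul_const C)) hle
    _ = a + (μ.real univ)⁻¹ * (∫ y, f y ∂μ) * C := by
        rw [integral_add (integrable_const a) (hf.mul_const C), integral_const, integral_mul_const,
          smul_eq_mul]
        field_simp

/-- For convex `F` (i.e. `F'' ≥ 0`), the error term `e(x) = F'(x)x - F(x)` is nondecreasing
on `[0,∞)`, and the Jensen-type inequality
`⨍_B e(f) ≤ e(⨍_B f) + (⨍_B f) ∫_{⨍_B f}^∞ e'(t)/t dt` holds. -/
theorem stmt_6 (n : ℕ) (F : ℝ → ℝ) (hF : ContDiff ℝ 2 F)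
    (hconv : ∀ x ≥ (0:ℝ), 0 ≤ deriv (deriv F) x)
    (x₀ : EuclideanSpace ℝ (Fin n)) (r : ℝ) (hr : 0 < r)
    (f : EuclideanSpace ℝ (Fin n) → ℝ)
    (hf0 : ∀ y, 0 ≤ f y)
    (hfint : IntegrableOn f (ball x₀ r))
    (heint : IntegrableOn (fun y => deriv F (f y) * f y - F (f y)) (ball x₀ r))
    (hJint : IntegrableOn (fun t => deriv (fun s => deriv F s * s - F s) t / t)
        (Set.Ioi (⨍ y in ball x₀ r, f y))) :
    MonotoneOn (fun x => deriv F x * x - F x) (Set.Ici 0) ∧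
    ⨍ y in ball x₀ r, (deriv F (f y) * f y - F (f y)) ≤
      (deriv F (⨍ y in ball x₀ r, f y) * (⨍ y in ball x₀ r, f y) - F (⨍ y in ball x₀ r, f y)) +
        (⨍ y in ball x₀ r, f y) *
          ∫ t in Set.Ioi (⨍ y in ball x₀ r, f y), deriv (fun s => deriv F s * s - F s) t / t := by
  have hde (t : ℝ) : HasDerivAt (fun s => deriv F s * s - F s) (deriv (deriv F) t * t) t :=
    hasDerivAt_deriv_mul_sub (hF.differentiable two_ne_zero t) (hF.differentiable_deriv_two t)
  have hd0 : ∀ t ≥ 0, 0 ≤ deriv (fun s => deriv F s * s - F s) t := fun t ht =>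
    (hde t).deriv ▸ mul_nonneg (hconv t ht) ht
  have hd : ∀ t ≥ (0 : ℝ), DifferentiableAt ℝ (fun s => deriv F s * s - F s) t :=
    fun t _ => (hde t).differentiableAt
  refine ⟨monotoneOn_Ici_of_deriv_nonneg hd hd0, ?_⟩
  have : IsFiniteMeasure (volume.restrict (ball x₀ r)) :=
    isFiniteMeasure_restrict.2 measure_ball_lt_top.ne
  have : NeZero (volume.restrict (ball x₀ r)) :=
    ⟨by simpa [Measure.restrict_eq_zero] using (measure_ball_pos volume x₀ hr).ne'⟩
  have hm : 0 ≤ ⨍ y in ball x₀ r, f y := by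
    rw [average_eq, smul_eq_mul]
    exact mul_nonneg (by positivity) (integral_nonneg hf0)
  exact average_le_add_average_mul heint hfint
    (ae_of_all _ fun y => le_add_mul_integral_deriv_div_s6 hd hd0 hm (hf0 y) hJint)
end
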